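/- arXiv:0903.4432 — 5 statements merged into one kernel-verified Lean document; each statement's English description precedes it below -/
import Mathlib

section
/- If x and z are related by z = x(1 - x^h) and A_h denotes the power series satisfying A_h(q)=1+q·A_h(q)^{h+1} with constant term 1, then A_h(z^h) = (1 - x^h)^{-1}, as an identity of formal power series in x. -/
/-- Composition `f ∘ g` of formal power series, valid when `g` has zero
constant term (in that case `coeff n (g^k) = 0` for `k > n`). -/
noncomputable def pscomp {R : Type*} [CommSemiring R] (f g : PowerSeries R) :
    PowerSeries R :=
  PowerSeries.mk fun n =>
    ∑ k ∈ Finset.range (n + 1), PowerSeries.coeff k f * PowerSeries.coeff n (g ^ k)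

/-- The generating function of the generalized Catalan numbers
`A_{h,n} = (1/(hn+1)) * binom((h+1)n, n)`. -/
noncomputable def genCatalanGF (h : ℕ) : PowerSeries ℚ :=
  PowerSeries.mk fun n =>
    (1 / ((h : ℚ) * n + 1)) * (Nat.choose ((h + 1) * n) n : ℚ)

/-! Put `y = x^h`, so that `z^h = y (1 - y)^h`. With `c r k` the coefficients of `A_h^r`, the
closed form of `c` turns Pascal's rule into `c (r+1) (k+1) = c r (k+1) + c (r+h+1) k`, so
`Ψ_r = (1 - y)^r A_h^r(y (1 - y)^h)` satisfies `Ψ_{r+1} = (1 - y) Ψ_r + y Ψ_{r+h+1}`, while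
`Ψ_0 = 1`. Induction on `N`, then on `r`, gives `Ψ_r ≡ 1 mod y^N` for all `r`; the case `r = 1`
is the theorem. Only ring identities enter, so `y` can be any element of any commutative ring,
and taking `y = X^h` in `ℚ⟦X⟧` avoids composing power series. -/

open Finset PowerSeries

/-- The coefficient of `q^k` in `A_h(q)^r`, that is `r/(hk+r) * C((h+1)k+r-1, k)`, written so
that Pascal's rule gives its recurrence in `r`. -/
def fussCatalan (h r : ℕ) : ℕ → ℤ
  | 0 => 1
  | k + 1 => ((h + 1) * k + h + r).choose (k + 1) - h * ((h + 1) * k + h + r).choose k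

@[simp]
theorem fussCatalan_zero (h r : ℕ) : fussCatalan h r 0 = 1 := rfl

theorem fussCatalan_succ_succ (h r k : ℕ) :
    fussCatalan h (r + 1) (k + 1) = fussCatalan h r (k + 1) + fussCatalan h (r + h + 1) k := by
  cases k with
  | zero => simp [fussCatalan]
  | succ j =>
    have e₁ : (h + 1) * (j + 1) + h + (r + 1) = (h + 1) * (j + 1) + h + r + 1 := by ring
    have e₂ : (h + 1) * j + h + (r + h + 1) = (h + 1) * (j + 1) + h + r := by ring
    simp only [fussCatalan, e₁, e₂, Nat.choose_succ_succ', Nat.cast_add]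
    ring

theorem fussCatalan_zero_succ (h k : ℕ) : fussCatalan h 0 (k + 1) = 0 := by
  have hmul := Nat.choose_succ_right_eq ((h + 1) * k + h) k
  rw [show (h + 1) * k + h - k = h * (k + 1) by rw [Nat.sub_eq_of_eq_add]; ring] at hmul
  have hchoose : ((h + 1) * k + h).choose (k + 1) = h * ((h + 1) * k + h).choose k := by
    apply Nat.eq_of_mul_eq_mul_right (Nat.succ_pos k)
    rw [hmul, Nat.succ_eq_add_one]
    ring
  simp [fussCatalan, hchoose]

theorem coeff_genCatalanGF (h k : ℕ) : coeff k (genCatalanGF h) = fussCatalan h 1 k := by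
  rw [genCatalanGF, coeff_mk]
  cases k with
  | zero => simp [fussCatalan]
  | succ j =>
    have hmul := Nat.choose_succ_right_eq ((h + 1) * j + h + 1) j
    rw [show (h + 1) * j + h + 1 - j = h * (j + 1) + 1 by rw [Nat.sub_eq_of_eq_add]; ring] at hmul
    have hmulℚ : (((h + 1) * j + h + 1).choose (j + 1) : ℚ) * (j + 1) =
        ((h + 1) * j + h + 1).choose j * (h * (j + 1) + 1) := by exact_mod_cast hmul
    rw [show (h + 1) * (j + 1) = (h + 1) * j + h + 1 by ring]
    simp only [fussCatalan, Int.cast_sub, Int.cast_mul, Int.cast_natCast]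
    field_simp
    push_cast
    linear_combination -(h : ℚ) * hmulℚ

section FussSum

variable {R : Type*} [CommRing R]

/-- The `N`-th truncation of `(1 - y)^r A_h(y (1 - y)^h)^r`. -/
def fussSum (h : ℕ) (y : R) (N r : ℕ) : R :=
  ∑ k ∈ range N, (fussCatalan h r k : R) * y ^ k * (1 - y) ^ (h * k + r)

theorem fussSum_succ_zero (h : ℕ) (y : R) (N : ℕ) : fussSum h y (N + 1) 0 = 1 := by
  simp [fussSum, sum_range_succ', fussCatalan_zero_succ]

theorem fussSum_succ_succ (h : ℕ) (y : R) (N r : ℕ) :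
    fussSum h y (N + 1) (r + 1) =
      (1 - y) * fussSum h y (N + 1) r + y * fussSum h y N (r + h + 1) := by
  have step (k : ℕ) :
      (fussCatalan h (r + 1) (k + 1) : R) * y ^ (k + 1) * (1 - y) ^ (h * (k + 1) + (r + 1)) =
      (1 - y) * ((fussCatalan h r (k + 1) : R) * y ^ (k + 1) * (1 - y) ^ (h * (k + 1) + r)) +
        y * ((fussCatalan h (r + h + 1) k : R) * y ^ k * (1 - y) ^ (h * k + (r + h + 1))) := by
    rw [fussCatalan_succ_succ]
    push_cast
    ring
  rw [fussSum, fussSum, fussSum, sum_range_succ', sum_range_succ' _ N]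
  simp only [step, sum_add_distrib, ← mul_sum, fussCatalan_zero]
  ring

theorem pow_dvd_fussSum_sub_one (h : ℕ) (y : R) (N r : ℕ) : y ^ N ∣ fussSum h y N r - 1 := by
  induction N generalizing r with
  | zero => simp
  | succ N ihN =>
    induction r with
    | zero => simp [fussSum_succ_zero]
    | succ r ihr =>
      have split : fussSum h y (N + 1) (r + 1) - 1 =
          (1 - y) * (fussSum h y (N + 1) r - 1) + y * (fussSum h y N (r + h + 1) - 1) := by
        rw [fussSum_succ_succ]; ring
      rw [split]
      exact dvd_add (ihr.mul_left _) (pow_succ' y N ▸ mul_dvd_mul_left y (ihN _))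

end FussSum

theorem X_pow_dvd_pscomp_sub_sum {R : Type*} [CommRing R] (f : R⟦X⟧) {g : R⟦X⟧}
    (hg : constantCoeff g = 0) (N : ℕ) :
    X ^ N ∣ pscomp f g - ∑ k ∈ range N, C (coeff k f) * g ^ k := by
  refine X_pow_dvd_iff.2 fun m hm => ?_
  rw [map_sub, pscomp, coeff_mk, map_sum, sub_eq_zero]
  simp only [coeff_C_mul]
  refine sum_subset (range_subset_range.2 hm) fun k _ hk => ?_
  have hgk : X ^ k ∣ g ^ k := pow_dvd_pow_of_dvd (X_dvd_iff.2 hg) k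
  rw [X_pow_dvd_iff.1 hgk m (by simpa using hk), mul_zero]

/-- With `z = x (1 - x^h)`, one has `A_h(z^h) = (1 - x^h)⁻¹` as formal power
series in `x`, i.e. `A_h(z^h) * (1 - x^h) = 1`. -/
theorem genCatalanGF_parametric (h : ℕ) (hh : 0 < h) :
    pscomp (genCatalanGF h) ((PowerSeries.X * (1 - PowerSeries.X ^ h)) ^ h) *
      (1 - PowerSeries.X ^ h) = 1 := by
  set G : ℚ⟦X⟧ := (X * (1 - X ^ h)) ^ h with hG_def
  have hG : constantCoeff G = 0 := by simp [G, hh.ne']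
  ext m
  have htrunc := (X_pow_dvd_pscomp_sub_sum (genCatalanGF h) hG (m + 1)).mul_right (1 - X ^ h)
  have hsum : (∑ k ∈ range (m + 1), C (coeff k (genCatalanGF h)) * G ^ k) * (1 - X ^ h) =
      fussSum h (X ^ h) (m + 1) 1 := by
    rw [fussSum, sum_mul]
    refine sum_congr rfl fun k _ => ?_
    rw [coeff_genCatalanGF, map_intCast, hG_def, ← pow_mul, mul_pow]
    ring
  have hfuss : X ^ (m + 1) ∣ fussSum h (X ^ h : ℚ⟦X⟧) (m + 1) 1 - 1 :=
    (pow_dvd_pow (X : ℚ⟦X⟧) (Nat.le_mul_of_pos_left _ hh)).trans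
      (pow_mul (X : ℚ⟦X⟧) h (m + 1) ▸ pow_dvd_fussSum_sub_one h _ _ 1)
  have key := dvd_add htrunc hfuss
  rw [sub_mul, hsum, sub_add_sub_cancel] at key
  simpa [sub_eq_zero] using X_pow_dvd_iff.1 key m (Nat.lt_succ_self m)
end

section
/- The radius of convergence of the generalized Catalan generating function A_h(q) = Σ_n (1/(hn+1))·binom((h+1)n,n)·q^n equals h^h/(h+1)^{h+1}, and at this value the series converges to (h+1)/h. -/
/-!
The coefficients of `A = A_h(q)` are the Raney numbers `R_1(n)`, and Raney's convolution
`R_1 * R_t = R_{t+1}` gives `A^t = Σ R_t(n) q^n`. Since `R_{h+1}(n) = R_1(n+1)`, wherever `A`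
converges absolutely it satisfies `A = 1 + q A^{h+1}`. For `ρ = h^h/(h+1)^{h+1}` and
`Y = (h+1)/h`, Bernoulli's inequality (applied to `h x/(h+1)`) gives `x - 1 ≤ ρ x^{h+1}` for
`x > 0`, with equality only at `x = Y`. Hence:
* below `ρ` the series converges, as `binom((h+1)n, n) h^{hn}` is one term of `(1+h)^{(h+1)n}`;
* above `ρ`, absolute convergence at some `q' ∈ (ρ, |q|)` would give
  `x - 1 = q' x^{h+1} > ρ x^{h+1}`;
* on `[0, ρ)`, `A` is continuous, starts at `1 < Y` and can never equal `Y` (that forces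
  `q = ρ`), so it stays below `Y`. The partial sums at `ρ` are then bounded by `Y`, and the
  sum `S ≥ 1` satisfies `S - 1 = ρ S^{h+1}`, which forces `S = Y`.
-/

open Finset

/-- `raney h t n = t/((h+1)n+t) · binom((h+1)n+t, n)` is the coefficient of `q^n` in `A_h(q)^t`.
The case `n = 0` is split off because the formula reads `0/0` at `t = n = 0`. -/
noncomputable def raney (h t n : ℕ) : ℝ :=
  if n = 0 then 1
  else (t : ℝ) / ((h + 1) * n + t : ℕ) * (((h + 1) * n + t).choose n : ℕ)

section Raney

variable (h : ℕ)

@[simp] lemma raney_zero_right (t : ℕ) : raney h t 0 = 1 := if_pos rfl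

lemma raney_succ_right (t n : ℕ) :
    raney h t (n + 1) =
      (t : ℝ) / ((h + 1) * (n + 1) + t : ℕ) * (((h + 1) * (n + 1) + t).choose (n + 1) : ℕ) :=
  if_neg n.succ_ne_zero

@[simp] lemma raney_zero_succ (n : ℕ) : raney h 0 (n + 1) = 0 := by
  simp [raney_succ_right]

lemma raney_of_pos {t : ℕ} (ht : 0 < t) (n : ℕ) :
    raney h t n = (t : ℝ) / ((h + 1) * n + t : ℕ) * (((h + 1) * n + t).choose n : ℕ) := by
  cases n with
  | zero => simp [(Nat.cast_pos.mpr ht).ne']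
  | succ n => exact raney_succ_right h t n

lemma raney_nonneg (t n : ℕ) : 0 ≤ raney h t n := by
  unfold raney; split <;> positivity

lemma raney_succ_succ (t n : ℕ) :
    raney h (t + 1) (n + 1) = raney h t (n + 1) + raney h (t + h + 1) n := by
  obtain ⟨M, hM⟩ : ∃ M, (h + 1) * (n + 1) + t = M := ⟨_, rfl⟩
  have hsucc : (h + 1) * (n + 1) + (t + 1) = M + 1 := by rw [← hM]; ring
  have hshift : (h + 1) * n + (t + h + 1) = M := by rw [← hM]; ring
  have hsub : M - n = h * (n + 1) + t + 1 := Nat.sub_eq_of_eq_add (by rw [← hM]; ring)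
  have pascal :
      (((M + 1).choose (n + 1) : ℕ) : ℝ) = (M + 1) * (M.choose n : ℕ) / (n + 1) := by
    rw [eq_div_iff (by positivity)]
    exact_mod_cast (Nat.add_one_mul_choose_eq M n).symm
  have ratio : ((M.choose (n + 1) : ℕ) : ℝ) =
      (h * (n + 1) + t + 1) * (M.choose n : ℕ) / (n + 1) := by
    rw [eq_div_iff (by positivity), mul_comm _ ((M.choose n : ℕ) : ℝ)]
    exact_mod_cast hsub ▸ Nat.choose_succ_right_eq M n
  rw [raney_succ_right, raney_succ_right, raney_of_pos h (by omega), hsucc, hshift, hM,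
    pascal, ratio]
  have hM0 : (M : ℝ) ≠ 0 := by rw [← hM]; positivity
  field_simp
  rw [← hM]
  push_cast
  ring

lemma raney_one (n : ℕ) : raney h 1 n = 1 / ((h : ℝ) * n + 1) * ((h + 1) * n).choose n := by
  have hsub : (h + 1) * n + 1 - n = h * n + 1 := Nat.sub_eq_of_eq_add (by ring)
  have key : ((((h + 1) * n + 1).choose n : ℕ) : ℝ) =
      ((h + 1) * n + 1) * (((h + 1) * n).choose n : ℕ) / (h * n + 1) := by
    rw [eq_div_iff (by positivity), mul_comm _ ((((h + 1) * n).choose n : ℕ) : ℝ)]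
    exact_mod_cast (hsub ▸ Nat.choose_mul_succ_eq ((h + 1) * n) n).symm
  rw [raney_of_pos h one_pos, key]
  field_simp
  push_cast
  ring

lemma raney_self_add_one (n : ℕ) : raney h (h + 1) n = raney h 1 (n + 1) := by
  have hsub : (h + 1) * (n + 1) - n = h * (n + 1) + 1 := Nat.sub_eq_of_eq_add (by ring)
  have key : ((((h + 1) * (n + 1)).choose (n + 1) : ℕ) : ℝ) =
      (h * (n + 1) + 1) * (((h + 1) * (n + 1)).choose n : ℕ) / (n + 1) := by
    rw [eq_div_iff (by positivity), mul_comm _ ((((h + 1) * (n + 1)).choose n : ℕ) : ℝ)]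
    exact_mod_cast hsub ▸ Nat.choose_succ_right_eq ((h + 1) * (n + 1)) n
  rw [raney_of_pos h h.succ_pos, raney_one, key,
    show (h + 1) * n + (h + 1) = (h + 1) * (n + 1) by ring]
  field_simp
  push_cast
  ring

lemma sum_antidiagonal_raney_one_mul (n t : ℕ) :
    ∑ p ∈ antidiagonal n, raney h 1 p.1 * raney h t p.2 = raney h (t + 1) n := by
  induction n generalizing t with
  | zero => simp
  | succ n ihn =>
    induction t with
    | zero => simp [Nat.sum_antidiagonal_succ']
    | succ t iht =>
      rw [Nat.sum_antidiagonal_succ'] at iht ⊢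
      simp only [raney_zero_right, mul_one] at iht ⊢
      simp only [raney_succ_succ h t, mul_add, sum_add_distrib]
      rw [ihn, raney_succ_succ h (t + 1) n, show t + 1 + h + 1 = t + h + 1 + 1 by ring]
      linarith

end Raney

lemma choose_mul_pow_le_one_add_pow {x : ℝ} (hx : 0 ≤ x) (N k : ℕ) :
    (N.choose k : ℝ) * x ^ (N - k) ≤ (1 + x) ^ N := by
  rcases le_or_gt k N with hk | hk
  · rw [add_pow]
    calc (N.choose k : ℝ) * x ^ (N - k) = 1 ^ k * x ^ (N - k) * N.choose k := by ring
      _ ≤ _ := single_le_sum (f := fun m => 1 ^ m * x ^ (N - m) * (N.choose m : ℝ))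
          (fun m _ => by positivity) (mem_range.mpr (by omega))
  · rw [Nat.choose_eq_zero_of_lt hk, Nat.cast_zero, zero_mul]
    positivity

noncomputable def catalanRadius (h : ℕ) : ℝ := (h : ℝ) ^ h / (h + 1) ^ (h + 1)

lemma catalanRadius_pos (h : ℕ) : 0 < catalanRadius h := by
  rcases h.eq_zero_or_pos with rfl | hh
  · norm_num [catalanRadius]
  · unfold catalanRadius; positivity

lemma raney_one_mul_catalanRadius_pow_le_one (h n : ℕ) :
    raney h 1 n * catalanRadius h ^ n ≤ 1 := by
  have hsub : (h + 1) * n - n = h * n := Nat.sub_eq_of_eq_add (by ring)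
  have hρ : catalanRadius h ^ n = (h : ℝ) ^ (h * n) / (1 + h) ^ ((h + 1) * n) := by
    rw [catalanRadius, div_pow, ← pow_mul, ← pow_mul, add_comm (1 : ℝ)]
  have hC := choose_mul_pow_le_one_add_pow (Nat.cast_nonneg h) ((h + 1) * n) n
  rw [hsub] at hC
  have hd : 1 / ((h : ℝ) * n + 1) ≤ 1 := by
    rw [div_le_one (by positivity)]; linarith [show (0 : ℝ) ≤ h * n by positivity]
  calc raney h 1 n * catalanRadius h ^ n
      = 1 / ((h : ℝ) * n + 1) * ((((h + 1) * n).choose n : ℝ) * h ^ (h * n) /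
          (1 + h) ^ ((h + 1) * n)) := by rw [raney_one, hρ]; ring
    _ ≤ 1 * 1 := by
      gcongr
      exact div_le_one_of_le₀ hC (by positivity)
    _ = 1 := one_mul 1

section Series

variable {h : ℕ}

lemma summable_norm_raney_one_mul_pow {q : ℝ} (hq : |q| < catalanRadius h) :
    Summable fun n => ‖raney h 1 n * q ^ n‖ := by
  have hρ := catalanRadius_pos h
  refine Summable.of_nonneg_of_le (fun n => norm_nonneg _) (fun n => ?_)
    (summable_geometric_of_lt_one (by positivity) ((div_lt_one hρ).mpr hq))
  calc ‖raney h 1 n * q ^ n‖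
      = raney h 1 n * catalanRadius h ^ n * (|q| / catalanRadius h) ^ n := by
        rw [norm_mul, norm_pow, Real.norm_eq_abs, Real.norm_eq_abs,
          abs_of_nonneg (raney_nonneg h 1 n), div_pow]
        field_simp
    _ ≤ 1 * (|q| / catalanRadius h) ^ n := by
        gcongr; exact raney_one_mul_catalanRadius_pow_le_one h n
    _ = (|q| / catalanRadius h) ^ n := one_mul _

lemma tsum_pow_eq_tsum_raney {q : ℝ} (hq : Summable fun n => ‖raney h 1 n * q ^ n‖)
    (t : ℕ) :
    Summable (fun n => ‖raney h t n * q ^ n‖) ∧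
      (∑' n, raney h 1 n * q ^ n) ^ t = ∑' n, raney h t n * q ^ n := by
  induction t with
  | zero =>
    have hsupp : ∀ n ≠ 0, raney h 0 n * q ^ n = 0 := by
      rintro (_ | n) hn
      · exact absurd rfl hn
      · simp
    refine ⟨(hasSum_single 0 fun n hn => by simp [hsupp n hn]).summable, ?_⟩
    rw [tsum_eq_single 0 hsupp]
    simp
  | succ t ih =>
    have hconv : ∀ n, ∑ p ∈ antidiagonal n,
        raney h 1 p.1 * q ^ p.1 * (raney h t p.2 * q ^ p.2) = raney h (t + 1) n * q ^ n := by
      intro n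
      rw [← sum_antidiagonal_raney_one_mul, sum_mul]
      refine sum_congr rfl fun p hp => ?_
      rw [← mem_antidiagonal.mp hp, pow_add]
      ring
    refine ⟨?_, ?_⟩
    · simpa only [hconv] using summable_norm_sum_mul_antidiagonal_of_summable_norm hq ih.1
    · rw [pow_succ', ih.2, tsum_mul_tsum_eq_tsum_sum_antidiagonal_of_summable_norm hq ih.1]
      simp only [hconv]

lemma tsum_eq_one_add_mul_pow {q : ℝ} (hq : Summable fun n => ‖raney h 1 n * q ^ n‖) :
    ∑' n, raney h 1 n * q ^ n = 1 + q * (∑' n, raney h 1 n * q ^ n) ^ (h + 1) := by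
  rw [(tsum_pow_eq_tsum_raney hq (h + 1)).2, hq.of_norm.tsum_eq_zero_add, ← tsum_mul_left]
  simp only [raney_zero_right, pow_zero, mul_one, raney_self_add_one, pow_succ]
  congr 1
  exact tsum_congr fun n => by ring

lemma one_le_tsum_raney_one_mul_pow {q : ℝ} (hq : 0 ≤ q)
    (hs : Summable fun n => raney h 1 n * q ^ n) : 1 ≤ ∑' n, raney h 1 n * q ^ n := by
  simpa using hs.le_tsum 0 fun n _ => mul_nonneg (raney_nonneg h 1 n) (pow_nonneg hq n)

lemma catalanRadius_mul_pow_eq (hh : 0 < h) :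
    catalanRadius h * (((h : ℝ) + 1) / h) ^ (h + 1) = ((h : ℝ) + 1) / h - 1 := by
  have : (h : ℝ) ≠ 0 := by positivity
  rw [catalanRadius, div_pow]
  field_simp
  ring

lemma sub_one_lt_catalanRadius_mul_pow (hh : 0 < h) {x : ℝ} (hx : 0 < x)
    (hxY : x ≠ ((h : ℝ) + 1) / h) : x - 1 < catalanRadius h * x ^ (h + 1) := by
  have hh' : (0 : ℝ) < h := by exact_mod_cast hh
  set s : ℝ := h * x / (h + 1) - 1 with hs
  have hs1 : -1 ≤ s := by
    have : 0 ≤ (h : ℝ) * x / (h + 1) := by positivity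
    linarith
  have hs0 : s ≠ 0 := by
    contrapose! hxY
    rw [hs, sub_eq_zero, div_eq_one_iff_eq (by positivity)] at hxY
    field_simp
    linarith
  have bernoulli := one_add_mul_self_lt_rpow_one_add hs1 hs0 (p := ((h + 1 : ℕ) : ℝ))
    (by push_cast; linarith)
  rw [Real.rpow_natCast] at bernoulli
  have e1 : 1 + ((h + 1 : ℕ) : ℝ) * s = h * (x - 1) := by
    rw [hs]; push_cast; field_simp; ring
  have e2 : (1 + s) ^ (h + 1) = h * (catalanRadius h * x ^ (h + 1)) := by
    rw [hs, add_sub_cancel, catalanRadius, div_pow, mul_pow, pow_succ (h : ℝ)]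
    field_simp
  rw [e1, e2] at bernoulli
  exact lt_of_mul_lt_mul_left bernoulli hh'.le

lemma sub_one_le_catalanRadius_mul_pow (hh : 0 < h) {x : ℝ} (hx : 0 < x) :
    x - 1 ≤ catalanRadius h * x ^ (h + 1) := by
  rcases eq_or_ne x (((h : ℝ) + 1) / h) with rfl | hxY
  · exact (catalanRadius_mul_pow_eq hh).ge
  · exact (sub_one_lt_catalanRadius_mul_pow hh hx hxY).le

lemma not_summable_of_catalanRadius_lt_abs (hh : 0 < h) {q : ℝ} (hq : catalanRadius h < |q|) :
    ¬ Summable fun n => raney h 1 n * q ^ n := by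
  intro hs
  have hρ := catalanRadius_pos h
  obtain ⟨q', hρq', hq'q⟩ := exists_between hq
  have hq'0 : 0 < q' := hρ.trans hρq'
  have hq0 : |q| ≠ 0 := (hρ.trans hq).ne'
  obtain ⟨C, hC⟩ := hs.tendsto_atTop_zero.norm.bddAbove_range
  have hs' : Summable fun n => ‖raney h 1 n * q' ^ n‖ := by
    refine Summable.of_nonneg_of_le (fun n => norm_nonneg _) (fun n => ?_)
      ((summable_geometric_of_lt_one (by positivity)
        ((div_lt_one (hρ.trans hq)).mpr hq'q)).mul_left C)
    calc ‖raney h 1 n * q' ^ n‖ = ‖raney h 1 n * q ^ n‖ * (q' / |q|) ^ n := by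
          simp only [norm_mul, norm_pow, Real.norm_eq_abs, abs_of_pos hq'0, div_pow]
          field_simp
      _ ≤ C * (q' / |q|) ^ n := by gcongr; exact hC ⟨n, rfl⟩
  set x := ∑' n, raney h 1 n * q' ^ n
  have hx : 1 ≤ x := one_le_tsum_raney_one_mul_pow hq'0.le hs'.of_norm
  have hfe : x = 1 + q' * x ^ (h + 1) := tsum_eq_one_add_mul_pow hs'
  have hle := sub_one_le_catalanRadius_mul_pow hh (x := x) (by linarith)
  have hlt := mul_lt_mul_of_pos_right hρq' (pow_pos (zero_lt_one.trans_le hx) (h + 1))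
  linarith

lemma continuousOn_tsum_raney_one_mul_pow {b : ℝ} (hb0 : 0 ≤ b) (hb : b < catalanRadius h) :
    ContinuousOn (fun q => ∑' n, raney h 1 n * q ^ n) (Set.Icc 0 b) := by
  refine continuousOn_tsum (fun n => by fun_prop)
    (summable_norm_raney_one_mul_pow (by rwa [abs_of_nonneg hb0])) fun n q hq => ?_
  simp only [norm_mul, norm_pow, Real.norm_eq_abs, abs_of_nonneg hq.1, abs_of_nonneg hb0]
  exact mul_le_mul_of_nonneg_left (pow_le_pow_left₀ hq.1 hq.2 n) (abs_nonneg _)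

lemma tsum_le_of_lt_catalanRadius (hh : 0 < h) {q : ℝ} (hq0 : 0 ≤ q)
    (hq : q < catalanRadius h) :
    ∑' n, raney h 1 n * q ^ n ≤ ((h : ℝ) + 1) / h := by
  by_contra! hlt
  have hF0 : ∑' n, raney h 1 n * (0 : ℝ) ^ n = 1 := by
    rw [tsum_eq_single 0 fun n hn => by simp [hn]]
    simp
  have hY : 1 < ((h : ℝ) + 1) / h := by
    rw [one_lt_div (by positivity)]; linarith
  obtain ⟨c, ⟨hc0, hcq⟩, hFc⟩ := intermediate_value_Icc hq0
    (continuousOn_tsum_raney_one_mul_pow hq0 hq) ⟨hF0.le.trans hY.le, hlt.le⟩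
  have hfe := tsum_eq_one_add_mul_pow
    (summable_norm_raney_one_mul_pow (h := h) (q := c) (by rw [abs_of_nonneg hc0]; linarith))
  simp only at hFc
  rw [hFc] at hfe
  have hρY := catalanRadius_mul_pow_eq hh
  have hlt := mul_lt_mul_of_pos_right (hcq.trans_lt hq) (pow_pos (zero_lt_one.trans hY) (h + 1))
  linarith

lemma summable_raney_one_mul_catalanRadius_pow (hh : 0 < h) :
    Summable fun n => raney h 1 n * catalanRadius h ^ n := by
  have hρ := catalanRadius_pos h
  refine summable_of_sum_range_le (c := ((h : ℝ) + 1) / h)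
    (fun n => mul_nonneg (raney_nonneg h 1 n) (by positivity)) fun N => ?_
  have hP : Continuous fun q : ℝ => ∑ n ∈ range N, raney h 1 n * q ^ n := by fun_prop
  refine le_of_tendsto
    ((hP.tendsto _).mono_left (nhdsWithin_le_nhds (s := Set.Iio (catalanRadius h)))) ?_
  filter_upwards [Ioo_mem_nhdsLT hρ] with q ⟨hq0, hq⟩
  have hs := (summable_norm_raney_one_mul_pow (h := h) (q := q)
    (by rwa [abs_of_pos hq0])).of_norm
  exact (hs.sum_le_tsum _ fun n _ => mul_nonneg (raney_nonneg h 1 n) (by positivity)).trans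
    (tsum_le_of_lt_catalanRadius hh hq0.le hq)

lemma tsum_raney_one_mul_catalanRadius_pow (hh : 0 < h) :
    ∑' n, raney h 1 n * catalanRadius h ^ n = ((h : ℝ) + 1) / h := by
  have hs := summable_raney_one_mul_catalanRadius_pow hh
  have hx := one_le_tsum_raney_one_mul_pow (catalanRadius_pos h).le hs
  have hfe := tsum_eq_one_add_mul_pow (summable_abs_iff.mpr hs)
  by_contra hne
  have := sub_one_lt_catalanRadius_mul_pow hh (by linarith) hne
  linarith

end Series

/-- The radius of convergence of `A_h(q) = Σ (1/(hn+1)) binom((h+1)n,n) q^n` is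
`h^h/(h+1)^{h+1}`: the series is summable for `|q|` below this value, not
summable above it, and at this value it sums to `(h+1)/h`. -/
theorem genCatalan_radius (h : ℕ) (hh : 0 < h) :
    (∀ q : ℝ, |q| < (h : ℝ) ^ h / (h + 1) ^ (h + 1) →
      Summable (fun n : ℕ =>
        (1 / ((h : ℝ) * n + 1)) * (Nat.choose ((h + 1) * n) n : ℝ) * q ^ n)) ∧
    (∀ q : ℝ, (h : ℝ) ^ h / (h + 1) ^ (h + 1) < |q| →
      ¬ Summable (fun n : ℕ =>
        (1 / ((h : ℝ) * n + 1)) * (Nat.choose ((h + 1) * n) n : ℝ) * q ^ n)) ∧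
    ∑' n : ℕ, (1 / ((h : ℝ) * n + 1)) * (Nat.choose ((h + 1) * n) n : ℝ) *
        ((h : ℝ) ^ h / (h + 1) ^ (h + 1)) ^ n = ((h : ℝ) + 1) / h := by
  simp only [← raney_one]
  exact ⟨fun q hq => (summable_norm_raney_one_mul_pow hq).of_norm,
    fun q hq => not_summable_of_catalanRadius_lt_abs hh hq,
    tsum_raney_one_mul_catalanRadius_pow hh⟩
end

section
/- Under the parametrization z = x(1 − g x^h), one has z^2 · A'_h(g z^h) = (x^2/2)·( (2/(h+2))·g x^h − (g x^h)^2 ), as an identity of formal power series in x. -/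
/-- `A'_h(q) = Σ_{n≥1} A_{h,n}/(hn+2) q^n` with
`A_{h,n} = (1/(hn+1)) binom((h+1)n,n)`, coefficients in `ℚ[g]`. -/
noncomputable def genCatalanGF' (h : ℕ) : PowerSeries (Polynomial ℚ) :=
  PowerSeries.mk fun n =>
    if n = 0 then 0 else
      Polynomial.C ((1 / ((h : ℚ) * n + 1)) * (Nat.choose ((h + 1) * n) n : ℚ) /
        ((h : ℚ) * n + 2))

/-!
Put `t = g x^h`, so that `z = x (1 - t)` and `z^2 (g z^h)^k = x^2 t^k (1 - t)^(hk+2)`. Both sides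
become `x^2` times a series in `t`, and the claim reduces to
`∑_{k ≥ 1} a_k t^k (1 - t)^(hk+2) = (1/2) ((2/(h+2)) t - t^2)` with `a_k = A_{h,k}/(hk+2)`,
checked modulo `t^(N+1)` for every `N`. Extending the formula to `a_0 = 1/2`, the coefficient
of `t^j` for `j ≥ 2` becomes
`∑_k a_k (-1)^(j-k) binom(hk+2, j-k) = (1/j!) ∑_k (-1)^(j-k) binom(j,k) ((h+1)k)_(j-2)`
(a falling factorial), the `j`-th finite difference of a polynomial in `k` of degree `j - 2`,
hence `0`.
-/

open Finset
open scoped Nat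

noncomputable def genCatalanCoeff' (h n : ℕ) : ℚ :=
  1 / ((h : ℚ) * n + 1) * (Nat.choose ((h + 1) * n) n : ℚ) / ((h : ℚ) * n + 2)

theorem factorial_mul_genCatalanCoeff'_mul_choose (h k i : ℕ) (hik : 2 ≤ i + k) :
    ((i + k)! : ℚ) * genCatalanCoeff' h k * (h * k + 2).choose i =
      (i + k).choose k * ((h + 1) * k).descFactorial (i + k - 2) := by
  obtain ⟨n, hn⟩ : ∃ n, h * k = n := ⟨_, rfl⟩
  have hnk : (h + 1) * k = n + k := by rw [← hn]; ring
  have hnq : (h : ℚ) * k = n := by rw [← hn]; push_cast; rfl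
  rw [genCatalanCoeff', hnk, hnq, hn]
  rcases le_or_gt i (n + 2) with hi | hi
  · have hdesc : ((n + k).descFactorial (i + k - 2) : ℚ) = (n + k)! / (n + 2 - i)! := by
      rw [eq_div_iff (by positivity), mul_comm, ← Nat.cast_mul,
        show n + 2 - i = n + k - (i + k - 2) by omega, Nat.factorial_mul_descFactorial (by omega)]
    rw [hdesc, Nat.cast_choose ℚ (by omega : k ≤ n + k), Nat.cast_choose ℚ hi,
      Nat.cast_choose ℚ (by omega : k ≤ i + k), show n + k - k = n by omega,
      show i + k - k = i by omega, Nat.factorial_succ (n + 1), Nat.factorial_succ n]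
    push_cast
    field_simp
    ring
  · rw [Nat.choose_eq_zero_of_lt hi, (Nat.descFactorial_eq_zero_iff_lt).2 (by omega)]
    simp

namespace Polynomial

theorem alternating_sum_range_choose_mul_eval_eq_zero {R : Type*} [CommRing R] {P : R[X]} {n : ℕ}
    (hP : P.natDegree < n) :
    ∑ k ∈ range (n + 1), (-1) ^ (n - k) * n.choose k * P.eval (k : R) = 0 := by
  have := congr_fun (fwdDiff_iter_eq_zero_of_degree_lt hP) 0
  rw [fwdDiff_iter_eq_sum_shift] at this
  simpa [zsmul_eq_mul] using this

theorem coeff_one_sub_X_pow {R : Type*} [CommRing R] (m i : ℕ) :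
    ((1 - X : R[X]) ^ m).coeff i = (-1) ^ i * m.choose i := by
  have : (1 - X : R[X]) = C (-1) * X + 1 := by simp [sub_eq_neg_add]
  rw [this, add_pow, finsetSum_coeff]
  simp_rw [one_pow, mul_one, mul_pow, ← C_pow, ← C_eq_natCast, mul_right_comm _ (X ^ _), ← C_mul,
    coeff_C_mul_X_pow]
  rw [sum_ite_eq]
  split_ifs with h
  · rfl
  · rw [Nat.choose_eq_zero_of_lt (by simpa using h)]; simp

theorem coeff_sum_C_mul_X_pow_mul_one_sub_X_pow {R : Type*} [CommRing R]
    (c : ℕ → R) (m : ℕ → ℕ) {d M : ℕ} (hd : d ≤ M) :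
    (∑ k ∈ range (M + 1), C (c k) * X ^ k * (1 - X) ^ m k).coeff d =
      ∑ k ∈ range (d + 1), c k * ((-1) ^ (d - k) * (m k).choose (d - k)) := by
  simp_rw [finsetSum_coeff, mul_assoc, coeff_C_mul, coeff_X_pow_mul', coeff_one_sub_X_pow,
    mul_ite, mul_zero]
  rw [← sum_filter]
  congr 1
  ext k
  simp only [mem_filter, mem_range]
  omega

end Polynomial

open Polynomial in
theorem sum_genCatalanCoeff'_mul_choose_eq_zero (h : ℕ) {j : ℕ} (hj : 2 ≤ j) :
    ∑ k ∈ range (j + 1), genCatalanCoeff' h k * ((-1) ^ (j - k) * (h * k + 2).choose (j - k)) =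
      0 := by
  set P : ℚ[X] := (descPochhammer ℚ (j - 2)).comp (C ((h : ℚ) + 1) * X)
  have hP : P.natDegree < j := by
    rw [natDegree_comp, descPochhammer_natDegree, natDegree_C_mul_X _ (by positivity)]
    omega
  have hterm : ∀ k ∈ range (j + 1), (j ! : ℚ) *
      (genCatalanCoeff' h k * ((-1) ^ (j - k) * (h * k + 2).choose (j - k))) =
        (-1) ^ (j - k) * j.choose k * P.eval (k : ℚ) := by
    intro k hk
    have hkj : j - k + k = j := Nat.sub_add_cancel (by simpa [Nat.lt_succ_iff] using hk)
    have := factorial_mul_genCatalanCoeff'_mul_choose h k (j - k) (by omega)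
    rw [hkj] at this
    simp only [P, eval_comp, eval_mul, eval_C, eval_X]
    rw [show ((h : ℚ) + 1) * k = (((h + 1) * k : ℕ) : ℚ) by push_cast; ring,
      descPochhammer_eval_eq_descFactorial]
    linear_combination (-1 : ℚ) ^ (j - k) * this
  have := alternating_sum_range_choose_mul_eval_eq_zero hP
  rw [← sum_congr rfl hterm, ← mul_sum] at this
  exact (mul_eq_zero.1 this).resolve_left (by positivity)

open Polynomial in
theorem X_pow_dvd_sum_genCatalanCoeff'_sub (h M : ℕ) :
    X ^ (M + 1) ∣ ∑ k ∈ range (M + 1),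
        C (if k = 0 then 0 else genCatalanCoeff' h k) * X ^ k * (1 - X) ^ (h * k + 2) -
      C (1 / 2) * (C (2 / ((h : ℚ) + 2)) * X - X ^ 2) := by
  rw [X_pow_dvd_iff]
  intro d hd
  rw [coeff_sub, coeff_sum_C_mul_X_pow_mul_one_sub_X_pow _ _ (by omega), sub_eq_zero]
  match d with
  | 0 => simp
  | 1 =>
    have : ((h : ℚ) + 1) ≠ 0 := by positivity
    simp [sum_range_succ, genCatalanCoeff', field]
  | d + 2 =>
    have hsum := sum_genCatalanCoeff'_mul_choose_eq_zero h (j := d + 2) (by omega)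
    have hb0 : genCatalanCoeff' h 0 = 1 / 2 := by simp [genCatalanCoeff']
    rw [sum_range_succ'] at hsum ⊢
    simp only [Nat.add_one_ne_zero, ↓reduceIte, zero_mul, add_zero]
    rw [eq_neg_of_add_eq_zero_left hsum, hb0]
    rcases d with _ | d <;> simp [Nat.choose_eq_zero_of_lt]

namespace PowerSeries

variable {R : Type*} [CommRing R]

theorem coeff_pow_eq_zero_of_lt {u : R⟦X⟧} (hu : constantCoeff u = 0) {n k : ℕ} (hnk : n < k) :
    coeff n (u ^ k) = 0 :=
  coeff_of_lt_order n <|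
    lt_of_lt_of_le (by exact_mod_cast hnk) (le_order_pow_of_constantCoeff_eq_zero k hu)

theorem X_pow_dvd_pscomp_sub (f : R⟦X⟧) {u : R⟦X⟧} (hu : constantCoeff u = 0) (N : ℕ) :
    X ^ (N + 1) ∣ pscomp f u - ∑ k ∈ range (N + 1), C (coeff k f) * u ^ k := by
  refine X_pow_dvd_iff.2 fun d hd => ?_
  rw [map_sub, pscomp, coeff_mk, map_sum, sub_eq_zero]
  simp_rw [coeff_C_mul]
  exact sum_subset (range_subset_range.2 (by omega)) fun k _ hk => by
    rw [coeff_pow_eq_zero_of_lt hu (by simpa using hk), mul_zero]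

theorem X_pow_mul_dvd_aeval_sub {S : Type*} [CommRing S] [Algebra S R] (c : R) (h : ℕ)
    {m : ℕ} {p q : Polynomial S} (hpq : Polynomial.X ^ m ∣ p - q) :
    X ^ (h * m) ∣ Polynomial.aeval (C c * X ^ h) p - Polynomial.aeval (C c * X ^ h) q := by
  obtain ⟨r, hr⟩ := hpq
  rw [← map_sub, hr, map_mul, map_pow, Polynomial.aeval_X, mul_pow, ← pow_mul]
  exact dvd_mul_of_dvd_left (dvd_mul_left _ _) _

theorem X_mul_one_sub_sq_mul_pow_eq_aeval {S : Type*} [CommRing S] [Algebra S R] (c : R) (a : S)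
    (h k : ℕ) :
    (X * (1 - C c * X ^ h)) ^ 2 * (C (algebraMap S R a) * (C c * (X * (1 - C c * X ^ h)) ^ h) ^ k) =
      X ^ 2 * Polynomial.aeval (C c * X ^ h)
        (Polynomial.C a * Polynomial.X ^ k * (1 - Polynomial.X) ^ (h * k + 2)) := by
  simp only [map_mul, map_pow, map_sub, map_one, Polynomial.aeval_C, Polynomial.aeval_X,
    algebraMap_apply, mul_pow, ← pow_mul]
  ring

end PowerSeries

theorem coeff_genCatalanGF' (h k : ℕ) :
    PowerSeries.coeff k (genCatalanGF' h) =
      Polynomial.C (if k = 0 then 0 else genCatalanCoeff' h k) := by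
  rw [genCatalanGF', PowerSeries.coeff_mk]
  split_ifs <;> simp [genCatalanCoeff']

open PowerSeries in
/-- With `z = x (1 - g x^h)`:
`z² A'_h(g z^h) = (x²/2) ((2/(h+2)) g x^h − (g x^h)²)` as formal power series
in `x` over `ℚ[g]`. -/
theorem genCatalan_primitive_parametric (h : ℕ) (hh : 0 < h) :
    (PowerSeries.X *
        (1 - PowerSeries.C Polynomial.X * PowerSeries.X ^ h)) ^ 2 *
      pscomp (genCatalanGF' h)
        (PowerSeries.C Polynomial.X *
          (PowerSeries.X *
            (1 - PowerSeries.C Polynomial.X * PowerSeries.X ^ h)) ^ h) =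
    PowerSeries.C (Polynomial.C (1 / 2 : ℚ)) * PowerSeries.X ^ 2 *
      (PowerSeries.C (Polynomial.C (2 / ((h : ℚ) + 2))) *
          (PowerSeries.C Polynomial.X * PowerSeries.X ^ h) -
        (PowerSeries.C Polynomial.X * PowerSeries.X ^ h) ^ 2) := by
  set τ : (Polynomial ℚ)⟦X⟧ := C Polynomial.X * X ^ h
  set u := C Polynomial.X * (X * (1 - τ)) ^ h
  set P : Polynomial ℚ :=
    Polynomial.C (1 / 2) * (Polynomial.C (2 / ((h : ℚ) + 2)) * Polynomial.X - Polynomial.X ^ 2)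
  have hu : constantCoeff u = 0 := by simp [u, hh.ne']
  have hRHS : C (Polynomial.C (1 / 2 : ℚ)) * X ^ 2 * (C (Polynomial.C (2 / ((h : ℚ) + 2))) * τ -
      τ ^ 2) = X ^ 2 * Polynomial.aeval τ P := by
    simp only [P, map_sub, map_mul, map_pow, Polynomial.aeval_C, Polynomial.aeval_X,
      PowerSeries.algebraMap_apply, Polynomial.algebraMap_eq]
    ring
  rw [hRHS]
  refine sub_eq_zero.1 <| ext fun N => X_pow_dvd_iff.1 ?_ N (lt_add_one N)
  set G := ∑ k ∈ range (N + 1), C (coeff k (genCatalanGF' h)) * u ^ k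
  set S : Polynomial ℚ := ∑ k ∈ range (N + 1),
    Polynomial.C (if k = 0 then 0 else genCatalanCoeff' h k) *
      Polynomial.X ^ k * (1 - Polynomial.X) ^ (h * k + 2)
  have hS : (X * (1 - τ)) ^ 2 * G = X ^ 2 * Polynomial.aeval τ S := by
    rw [map_sum, mul_sum, mul_sum]
    refine sum_congr rfl fun k _ => ?_
    rw [coeff_genCatalanGF']
    exact X_mul_one_sub_sq_mul_pow_eq_aeval _ _ h k
  have hsplit : (X * (1 - τ)) ^ 2 * pscomp (genCatalanGF' h) u - X ^ 2 * Polynomial.aeval τ P =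
      (X * (1 - τ)) ^ 2 * (pscomp (genCatalanGF' h) u - G) +
        X ^ 2 * (Polynomial.aeval τ S - Polynomial.aeval τ P) := by
    linear_combination hS
  have hSP : X ^ (N + 1) ∣ Polynomial.aeval τ S - Polynomial.aeval τ P :=
    (pow_dvd_pow X (Nat.le_mul_of_pos_left _ hh)).trans
      (X_pow_mul_dvd_aeval_sub _ h (X_pow_dvd_sum_genCatalanCoeff'_sub h N))
  rw [hsplit]
  exact dvd_add (dvd_mul_of_dvd_right (X_pow_dvd_pscomp_sub _ hu N) _) (dvd_mul_of_dvd_right hSP _)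
end

section
/- For any integer n with n > −1/2, the Catalan number C_n satisfies C_n = (1/(2π)) ∫_{1/4}^{∞} sqrt(4x−1) · x^{−n−2} dx; in particular for all natural numbers n, this integral equals (1/(n+1))·binom(2n,n). -/
open MeasureTheory Real Set Filter Topology

/-! Write `M s = ∫_{1/4}^∞ √(4x-1) x^(-s-2) dx`. Then `M 0 = 2π`, because
`4 arctan √(4x-1) - √(4x-1)/x` is an antiderivative of the integrand. Integrating the derivative
of `(4x-1)^(3/2) x^(-s-2)`, which vanishes at `1/4` and (for `s > -1/2`) at infinity, gives
`(s+2) M(s+1) = (4s+2) M(s)`: the recursion `(n+2) C_{n+1} = 2(2n+1) C_n` of the Catalan numbers. -/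

lemma sqrt_four_mul_sub_one_le (x : ℝ) : √(4 * x - 1) ≤ 2 * √x :=
  calc √(4 * x - 1) ≤ √(4 * x) := sqrt_le_sqrt (by linarith)
    _ = 2 * √x := by
      rw [sqrt_mul (by norm_num), show (4 : ℝ) = 2 ^ 2 by norm_num, sqrt_sq zero_le_two]

lemma hasDerivAt_sqrt_four_mul_sub_one {x : ℝ} (hx : 1 / 4 < x) :
    HasDerivAt (fun y => √(4 * y - 1)) (2 / √(4 * x - 1)) x := by
  have hlin : HasDerivAt (fun y : ℝ => 4 * y - 1) 4 x := by
    simpa using ((hasDerivAt_id x).const_mul 4).sub_const 1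
  refine ((hasDerivAt_sqrt (by linarith)).comp x hlin).congr_deriv ?_
  have : √(4 * x - 1) ≠ 0 := (sqrt_pos.mpr (by linarith)).ne'
  field_simp
  norm_num

lemma tendsto_sqrt_four_mul_sub_one_pow_mul_rpow_atTop {k : ℕ} {t : ℝ}
    (hkt : (k : ℝ) / 2 < t) :
    Tendsto (fun y : ℝ => √(4 * y - 1) ^ k * y ^ (-t)) atTop (𝓝 0) := by
  have hlim : Tendsto (fun y : ℝ => 2 ^ k * y ^ (-(t - k / 2))) atTop (𝓝 0) := by
    simpa using (tendsto_rpow_neg_atTop (by linarith : 0 < t - k / 2)).const_mul (2 ^ k : ℝ)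
  refine squeeze_zero' ?_ ?_ hlim
  · filter_upwards [eventually_gt_atTop 0] with y hy
    positivity
  filter_upwards [eventually_gt_atTop 0] with y hy
  calc √(4 * y - 1) ^ k * y ^ (-t) ≤ (2 * √y) ^ k * y ^ (-t) := by
        gcongr
        exact sqrt_four_mul_sub_one_le y
    _ = 2 ^ k * y ^ (-(t - k / 2)) := by
      rw [mul_pow, sqrt_eq_rpow, ← rpow_natCast (y ^ (1 / 2 : ℝ)), ← rpow_mul hy.le, mul_assoc,
        ← rpow_add hy]
      ring_nf

lemma integrableOn_sqrt_four_mul_sub_one_mul_rpow {s : ℝ} (hs : -1 / 2 < s) :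
    IntegrableOn (fun x : ℝ => √(4 * x - 1) * x ^ (-s - 2)) (Ioi (1 / 4)) := by
  have hdom : IntegrableOn (fun x : ℝ => 2 * x ^ (-s - 2 + 1 / 2)) (Ioi (1 / 4)) :=
    (integrableOn_Ioi_rpow_of_lt (by linarith) (by norm_num)).const_mul 2
  refine hdom.mono' ?_ ?_
  · refine ContinuousOn.aestronglyMeasurable ?_ measurableSet_Ioi
    refine (by fun_prop : Continuous fun x : ℝ => √(4 * x - 1)).continuousOn.mul
      (continuousOn_id.rpow_const fun x (hx : 1 / 4 < x) => Or.inl ?_)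
    exact (show (0 : ℝ) < x by linarith).ne'
  filter_upwards [ae_restrict_mem measurableSet_Ioi] with x (hx : 1 / 4 < x)
  have hx0 : 0 < x := by linarith
  rw [norm_of_nonneg (by positivity), rpow_add hx0, ← sqrt_eq_rpow]
  calc √(4 * x - 1) * x ^ (-s - 2) ≤ 2 * √x * x ^ (-s - 2) := by
        gcongr
        exact sqrt_four_mul_sub_one_le x
    _ = 2 * (x ^ (-s - 2) * √x) := by ring

noncomputable def cutMoment (s : ℝ) : ℝ :=
  ∫ x in Ioi (1 / 4 : ℝ), √(4 * x - 1) * x ^ (-s - 2)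

lemma cutMoment_zero : cutMoment 0 = 2 * π := by
  set F : ℝ → ℝ := fun y => 4 * arctan √(4 * y - 1) - √(4 * y - 1) / y
  have hderiv : ∀ x ∈ Ioi (1 / 4 : ℝ), HasDerivAt F (√(4 * x - 1) * x ^ (-0 - 2 : ℝ)) x := by
    intro x (hx : 1 / 4 < x)
    have hx0 : 0 < x := by linarith
    have hroot := hasDerivAt_sqrt_four_mul_sub_one hx
    have hsq : √(4 * x - 1) ^ 2 = 4 * x - 1 := sq_sqrt (by linarith)
    have hne : √(4 * x - 1) ≠ 0 := (sqrt_pos.mpr (by linarith)).ne'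
    refine (((hasDerivAt_arctan _).comp x hroot).const_mul 4 |>.sub
      (hroot.div (hasDerivAt_id x) hx0.ne')).congr_deriv ?_
    rw [show (-0 - 2 : ℝ) = -(2 : ℕ) by norm_num, rpow_neg hx0.le, rpow_natCast, id, hsq]
    field_simp
    ring
  have hcont : ContinuousWithinAt F (Ici (1 / 4)) (1 / 4) :=
    ContinuousAt.continuousWithinAt (by fun_prop (disch := norm_num))
  have hlim : Tendsto F atTop (𝓝 (2 * π)) := by
    have hroot : Tendsto (fun y : ℝ => √(4 * y - 1)) atTop atTop :=
      tendsto_sqrt_atTop.comp (tendsto_atTop_add_const_right _ _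
        (tendsto_id.const_mul_atTop (by norm_num)))
    have hquot := tendsto_sqrt_four_mul_sub_one_pow_mul_rpow_atTop (k := 1) (t := 1) (by norm_num)
    simp only [pow_one, rpow_neg_one, ← div_eq_mul_inv] at hquot
    rw [show 2 * π = 4 * (π / 2) - 0 by ring]
    exact ((tendsto_arctan_atTop.mono_right nhdsWithin_le_nhds).comp hroot).const_mul 4 |>.sub
      hquot
  have h := integral_Ioi_of_hasDerivAt_of_tendsto hcont hderiv
    (integrableOn_sqrt_four_mul_sub_one_mul_rpow (s := 0) (by norm_num)) hlim
  rw [cutMoment, h]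
  norm_num [F]

lemma cutMoment_add_one {s : ℝ} (hs : -1 / 2 < s) :
    (s + 2) * cutMoment (s + 1) = (4 * s + 2) * cutMoment s := by
  set G : ℝ → ℝ := fun y => √(4 * y - 1) ^ 3 * y ^ (-(s + 2))
  have hderiv : ∀ x ∈ Ioi (1 / 4 : ℝ), HasDerivAt G
      ((s + 2) * (√(4 * x - 1) * x ^ (-(s + 1) - 2)) -
        (4 * s + 2) * (√(4 * x - 1) * x ^ (-s - 2))) x := by
    intro x (hx : 1 / 4 < x)
    have hx0 : 0 < x := by linarith
    have hsq : √(4 * x - 1) ^ 2 = 4 * x - 1 := sq_sqrt (by linarith)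
    have hne : √(4 * x - 1) ≠ 0 := (sqrt_pos.mpr (by linarith)).ne'
    have hpow : x ^ (-s - 2) = x ^ (-(s + 1) - 2) * x := by
      rw [← rpow_add_one hx0.ne']
      ring_nf
    refine (((hasDerivAt_sqrt_four_mul_sub_one hx).pow 3).mul
      (hasDerivAt_rpow_const (p := -(s + 2)) (Or.inl hx0.ne'))).congr_deriv ?_
    rw [Pi.pow_apply, show -(s + 2) = -s - 2 by ring, show -s - 2 - 1 = -(s + 1) - 2 by ring,
      hpow]
    field_simp
    rw [show 3 - 1 = 2 from rfl, show √(4 * x - 1) ^ 4 = (√(4 * x - 1) ^ 2) ^ 2 by ring, hsq]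
    push_cast
    ring
  have hint₁ := (integrableOn_sqrt_four_mul_sub_one_mul_rpow (s := s + 1) (by linarith)).const_mul
    (s + 2)
  have hint₀ := (integrableOn_sqrt_four_mul_sub_one_mul_rpow hs).const_mul (4 * s + 2)
  have hcont : ContinuousWithinAt G (Ici (1 / 4)) (1 / 4) :=
    ContinuousAt.continuousWithinAt (by fun_prop (disch := norm_num))
  have hlim : Tendsto G atTop (𝓝 0) :=
    tendsto_sqrt_four_mul_sub_one_pow_mul_rpow_atTop (k := 3) (by push_cast; linarith)
  have h := integral_Ioi_of_hasDerivAt_of_tendsto hcont hderiv (hint₁.sub hint₀) hlim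
  rw [integral_sub hint₁ hint₀, integral_const_mul, integral_const_mul] at h
  have hG : G (1 / 4) = 0 := by norm_num [G]
  rw [hG, sub_zero] at h
  rw [cutMoment, cutMoment]
  linarith

lemma succ_succ_mul_catalan_succ (n : ℕ) :
    (n + 2) * catalan (n + 1) = 2 * (2 * n + 1) * catalan n := by
  apply Nat.eq_of_mul_eq_mul_left n.succ_pos
  calc (n + 1) * ((n + 2) * catalan (n + 1)) = (n + 1) * (n + 1).centralBinom := by
        rw [← succ_mul_catalan_eq_centralBinom]
    _ = (n + 1) * (2 * (2 * n + 1) * catalan n) := by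
      rw [Nat.succ_mul_centralBinom_succ, ← succ_mul_catalan_eq_centralBinom]
      ring

lemma cutMoment_natCast (n : ℕ) : cutMoment n = 2 * π * catalan n := by
  induction n with
  | zero => simp [cutMoment_zero]
  | succ n ih =>
    have hrec := cutMoment_add_one (s := n) (by linarith [n.cast_nonneg (α := ℝ)])
    have hcat : ((n : ℝ) + 2) * catalan (n + 1) = 2 * (2 * n + 1) * catalan n := by
      exact_mod_cast succ_succ_mul_catalan_succ n
    have hn : (n : ℝ) + 2 ≠ 0 := by positivity
    push_cast
    rw [ih] at hrec
    apply mul_left_cancel₀ hn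
    linear_combination hrec - 2 * π * hcat

/-- For every natural number `n` (i.e. every integer `n > −1/2`), the Catalan
number `C_n` is given by the cut integral
`C_n = (1/2π) ∫_{1/4}^∞ sqrt(4x−1) x^{−n−2} dx = (1/(n+1)) binom(2n,n)`. -/
theorem catalan_cut_integral (n : ℕ) :
    (1 / (2 * Real.pi)) *
        ∫ x in Set.Ioi (1 / 4 : ℝ), Real.sqrt (4 * x - 1) * x ^ (-(n : ℝ) - 2) =
      (Nat.choose (2 * n) n : ℝ) / ((n : ℝ) + 1) := by
  have hcat : ((n : ℝ) + 1) * catalan n = Nat.choose (2 * n) n := by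
    exact_mod_cast
      (succ_mul_catalan_eq_centralBinom n).trans (Nat.centralBinom_eq_two_mul_choose n)
  change 1 / (2 * π) * cutMoment n = _
  rw [cutMoment_natCast, ← hcat]
  field_simp
end

section
/- For every natural number n, ∫_{−2}^{2} x^{2n} · sqrt(4 − x^2) dx / (2π) = C_n, the n-th Catalan number. -/
/-!
Substituting `x = 2 cos t` turns the moment into `4 ^ (n + 1) * ∫₀^π cos^(2n) t sin² t dt`,
that is `4 ^ (n + 1) * (W n - W (n + 1))` with `W n = ∫₀^π cos^(2n)`. Wallis' reduction
`W (n + 1) = (2n + 1) / (2n + 2) * W n` gives `W n = π * binom(2n, n) / 4 ^ n` and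
`W n - W (n + 1) = W n / (2n + 2)`, so the moment is `2π * binom(2n, n) / (n + 1) = 2π * C_n`.
-/

open Real intervalIntegral

theorem integral_cos_pow_add_two_zero_pi (k : ℕ) :
    ∫ x in 0..π, cos x ^ (k + 2) = (k + 1) / (k + 2) * ∫ x in 0..π, cos x ^ k := by
  simp [integral_cos_pow]

theorem integral_cos_pow_even (n : ℕ) :
    ∫ x in 0..π, cos x ^ (2 * n) = π * n.centralBinom / 4 ^ n := by
  induction n with
  | zero => simp
  | succ k ih =>
    have hrec : ((k : ℝ) + 1) * (k + 1).centralBinom = 2 * (2 * k + 1) * k.centralBinom := by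
      exact_mod_cast Nat.succ_mul_centralBinom_succ k
    rw [Nat.mul_succ, integral_cos_pow_add_two_zero_pi, ih]
    push_cast
    field_simp
    linear_combination (-2 * 4 ^ k : ℝ) * hrec

theorem integral_cos_pow_even_mul_sin_sq (n : ℕ) :
    ∫ x in 0..π, cos x ^ (2 * n) * sin x ^ 2 = 2 * π * catalan n / 4 ^ (n + 1) := by
  have hcat : ((n : ℝ) + 1) * catalan n = n.centralBinom := by
    exact_mod_cast succ_mul_catalan_eq_centralBinom n
  have hintegrable (k : ℕ) : IntervalIntegrable (fun x => cos x ^ k) MeasureTheory.volume 0 π :=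
    (continuous_cos.pow k).intervalIntegrable 0 π
  calc ∫ x in 0..π, cos x ^ (2 * n) * sin x ^ 2
      = ∫ x in 0..π, cos x ^ (2 * n) - cos x ^ (2 * n + 2) := by
        congr 1 with x
        rw [sin_sq]; ring
    _ = 2 * π * catalan n / 4 ^ (n + 1) := by
        rw [integral_sub (hintegrable _) (hintegrable _), integral_cos_pow_add_two_zero_pi,
          integral_cos_pow_even, ← hcat]
        push_cast
        field_simp
        ring

theorem integral_mul_sqrt_sq_sub_sq {φ : ℝ → ℝ} (hφ : Continuous φ) {r : ℝ} (hr : 0 ≤ r) :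
    ∫ x in -r..r, φ x * √(r ^ 2 - x ^ 2) = ∫ t in 0..π, φ (r * cos t) * (r * sin t) ^ 2 := by
  have hderiv (t : ℝ) (_ : t ∈ Set.uIcc π 0) :
      HasDerivAt (fun t => r * cos t) (-(r * sin t)) t := by
    simpa using (hasDerivAt_cos t).const_mul r
  have hsubst := integral_comp_mul_deriv hderiv (by fun_prop)
    (by fun_prop : Continuous fun x => φ x * √(r ^ 2 - x ^ 2))
  simp only [cos_pi, cos_zero, mul_one, Function.comp_apply, mul_neg,
    integral_neg] at hsubst
  rw [← hsubst, integral_symm, neg_neg]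
  refine integral_congr fun t ht => ?_
  rw [Set.uIcc_of_le pi_pos.le] at ht
  have hsin : 0 ≤ r * sin t := mul_nonneg hr (sin_nonneg_of_mem_Icc ht)
  have hsq : r ^ 2 - (r * cos t) ^ 2 = (r * sin t) ^ 2 := by
    linear_combination -r ^ 2 * sin_sq_add_cos_sq t
  simp only [hsq, sqrt_sq hsin]
  ring

/-- Moments of the semicircle density:
`∫_{−2}^{2} x^{2n} sqrt(4−x²) dx / (2π) = C_n`. -/
theorem semicircle_moments (n : ℕ) :
    (∫ x in (-2 : ℝ)..2, x ^ (2 * n) * Real.sqrt (4 - x ^ 2)) / (2 * Real.pi) =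
      (catalan n : ℝ) := by
  have hmoment : ∫ x in (-2 : ℝ)..2, x ^ (2 * n) * √(4 - x ^ 2) = 2 * π * catalan n :=
    calc ∫ x in (-2 : ℝ)..2, x ^ (2 * n) * √(4 - x ^ 2)
        = ∫ t in 0..π, (2 * cos t) ^ (2 * n) * (2 * sin t) ^ 2 := by
          convert integral_mul_sqrt_sq_sub_sq (continuous_pow (2 * n)) zero_le_two using 3
          norm_num
      _ = ∫ t in 0..π, 4 ^ (n + 1) * (cos t ^ (2 * n) * sin t ^ 2) := by
          congr 1 with t
          rw [mul_pow, pow_mul]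
          ring
      _ = 2 * π * catalan n := by
          rw [integral_const_mul, integral_cos_pow_even_mul_sin_sq]
          field_simp
  rw [hmoment]
  field_simp
end
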